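/- arXiv:1907.08616 — 5 statements merged into one kernel-verified Lean document; each statement's English description precedes it below -/
import Mathlib

section
/- The determinant of the n×n Hilbert matrix H_n with entries H_{ij} = 1/(i+j−1), indexed by 1 ≤ i,j ≤ n, equals c_n^4 / c_{2n}, where c_n = ∏_{i=1}^{n−1} i!. -/
/-!
Let `L` be the lower triangular matrix whose `i`-th row lists the coefficients of the shifted
Legendre polynomial `Pᵢ`, so that `(L * H) i j = ∑ₖ [xᵏ]Pᵢ / (k + j + 1) = ∫₀¹ xʲ Pᵢ(x) dx`.
Since `[xᵏ]Pᵢ = (-1)ᵏ (i choose k) Q(k)` with `Q(x) = (x + 1)⋯(x + i) / i!`, dividing `Q` by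
`x + j + 1` and letting the `i`-th finite difference kill the quotient leaves
`Q(-j-1) · ∑ₖ (-1)ᵏ (i choose k) / (k + j + 1) = (-1)ⁱ j(j-1)⋯(j-i+1) · j! / (i + j + 1)!`.
So `L * H` is upper triangular, and `det H` is the ratio of the diagonal products of `L * H`
and `L`.
-/

open Finset Nat Polynomial Matrix
open scoped fwdDiff

section AlternatingSum

variable {R : Type*} [CommRing R]

theorem sum_neg_one_pow_mul_choose_mul_eq_fwdDiff_iter {M : Type*} [AddCommMonoid M]
    (f : M → R) (h y : M) (n : ℕ) :
    ∑ k ∈ range (n + 1), (-1) ^ k * n.choose k * f (y + k • h) =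
      (-1) ^ n * Δ_[h] ^[n] f y := by
  rw [fwdDiff_iter_eq_sum_shift, mul_sum]
  refine sum_congr rfl fun k hk => ?_
  obtain ⟨m, rfl⟩ := Nat.exists_eq_add_of_le (Nat.lt_succ_iff.mp (mem_range.mp hk))
  rw [zsmul_eq_mul, Nat.add_sub_cancel_left]
  push_cast
  have hsq : (-1 : R) ^ m * (-1) ^ m = 1 := by rw [← mul_pow]; norm_num
  linear_combination (-(-1 : R) ^ k * (k + m).choose k * f (y + k • h)) * hsq

theorem Polynomial.sum_neg_one_pow_mul_choose_mul_eval_eq_zero {Q : R[X]} {n : ℕ}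
    (hQ : Q.natDegree < n) :
    ∑ k ∈ range (n + 1), (-1) ^ k * n.choose k * Q.eval (k : R) = 0 := by
  simpa [fwdDiff_iter_eq_zero_of_degree_lt hQ] using
    sum_neg_one_pow_mul_choose_mul_eq_fwdDiff_iter Q.eval 1 0 n

end AlternatingSum

section PartialFractions

variable {K : Type*} [Field K] [CharZero K]

theorem fwdDiff_iter_one_div_add_one (n m : ℕ) :
    Δ_[1] ^[n] (fun k : ℕ => (1 : K) / (k + 1)) m = (-1) ^ n * n ! * m ! / (n + m + 1)! := by
  induction n generalizing m with
  | zero =>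
    have : (m ! : K) ≠ 0 := mod_cast m.factorial_ne_zero
    simp only [Function.iterate_zero, id_eq, pow_zero, one_mul, zero_add, factorial_succ,
      factorial_zero, mul_one, cast_mul, cast_add, cast_one]
    field_simp
  | succ n ih =>
    rw [Function.iterate_succ_apply', fwdDiff, ih, ih,
      show n + (m + 1) + 1 = n + m + 1 + 1 by omega, show n + 1 + m + 1 = n + m + 1 + 1 by omega,
      factorial_succ (n + m + 1), factorial_succ m, factorial_succ n]
    have : ((n + m + 1)! : K) ≠ 0 := mod_cast (n + m + 1).factorial_ne_zero
    have : (n + m + 1 + 1 : K) ≠ 0 := mod_cast (n + m + 1).succ_ne_zero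
    push_cast
    field_simp
    rw [pow_succ]
    ring

theorem sum_neg_one_pow_mul_choose_div (n m : ℕ) :
    ∑ k ∈ range (n + 1), (-1) ^ k * n.choose k / (k + m + 1 : K) =
      n ! * m ! / (n + m + 1)! := by
  have := sum_neg_one_pow_mul_choose_mul_eq_fwdDiff_iter (fun k : ℕ => (1 : K) / (k + 1)) 1 m n
  rw [fwdDiff_iter_one_div_add_one, ← mul_div_assoc, ← mul_assoc, ← mul_assoc, ← pow_add,
    Even.neg_one_pow ⟨n, rfl⟩, one_mul] at this
  rw [← this]
  refine sum_congr rfl fun k _ => ?_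
  rw [smul_eq_mul, mul_one, mul_one_div]
  push_cast
  ring

theorem Polynomial.sum_neg_one_pow_mul_choose_mul_eval_div (P : K[X]) {n : ℕ}
    (hP : P.natDegree ≤ n) (b : K) (hb : ∀ k ≤ n, (k : K) + b ≠ 0) :
    ∑ k ∈ range (n + 1), (-1) ^ k * n.choose k * P.eval (k : K) / (k + b) =
      P.eval (-b) * ∑ k ∈ range (n + 1), (-1) ^ k * n.choose k / (k + b) := by
  rcases n with _ | n
  · rw [eq_C_of_natDegree_le_zero hP]
    simp [div_eq_mul_inv]
  have hQ : (P /ₘ (X - C (-b))).natDegree < n + 1 := by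
    rw [natDegree_divByMonic _ (monic_X_sub_C _), natDegree_X_sub_C]
    omega
  have hPQ (k : K) : P.eval k = P.eval (-b) + (k + b) * (P /ₘ (X - C (-b))).eval k := by
    conv_lhs => rw [← modByMonic_add_div P (X - C (-b)), modByMonic_X_sub_C_eq_C_eval]
    simp only [eval_add, eval_C, eval_mul, eval_sub, eval_X, sub_neg_eq_add]
  rw [mul_sum, ← sub_eq_zero, ← sum_sub_distrib,
    ← sum_neg_one_pow_mul_choose_mul_eval_eq_zero hQ]
  refine sum_congr rfl fun k hk => ?_
  have := hb k (Nat.lt_succ_iff.mp (mem_range.mp hk))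
  rw [hPQ]
  field_simp
  ring

theorem Polynomial.sum_coeff_shiftedLegendre_div (i j : ℕ) :
    ∑ k ∈ range (i + 1), ((shiftedLegendre i).coeff k : K) / (k + j + 1) =
      (-1) ^ i * j.descFactorial i * j ! / (i + j + 1)! := by
  set P : K[X] := (ascPochhammer K i).comp (X + C 1)
  have hP : P.natDegree ≤ i := by
    rw [natDegree_comp, ascPochhammer_natDegree, natDegree_X_add_C, mul_one]
  have hP_natCast (k : ℕ) : P.eval (k : K) = i ! * (i + k).choose i := by
    simp only [P, eval_comp, eval_add, eval_X, eval_C]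
    rw [← cast_succ, ← cast_ascFactorial, ascFactorial_eq_factorial_mul_choose, add_comm k,
      cast_mul]
  have hP_neg : P.eval (-(j + 1 : K)) = (-1) ^ i * j.descFactorial i := by
    simp only [P, eval_comp, eval_add, eval_X, eval_C, show -(j + 1 : K) + 1 = -j by ring,
      ascPochhammer_eval_neg_eq_descPochhammer, descPochhammer_eval_eq_descFactorial]
  have hi : (i ! : K) ≠ 0 := mod_cast i.factorial_ne_zero
  calc ∑ k ∈ range (i + 1), ((shiftedLegendre i).coeff k : K) / (k + j + 1)
      = (i ! : K)⁻¹ *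
          ∑ k ∈ range (i + 1), (-1) ^ k * i.choose k * P.eval (k : K) / (k + (j + 1)) := by
        rw [mul_sum]
        refine sum_congr rfl fun k _ => ?_
        rw [coeff_shiftedLegendre, hP_natCast, ← add_assoc]
        field_simp
        push_cast
        ring
    _ = (i ! : K)⁻¹ * (P.eval (-(j + 1 : K)) * (i ! * j ! / (i + j + 1)!)) := by
        rw [sum_neg_one_pow_mul_choose_mul_eval_div P hP _ fun k _ => by
          rw [← add_assoc]; exact_mod_cast (k + j).succ_ne_zero,
          ← sum_neg_one_pow_mul_choose_div i j]
        simp only [add_assoc]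
    _ = (-1) ^ i * j.descFactorial i * j ! / (i + j + 1)! := by
        rw [hP_neg]
        field_simp

end PartialFractions

theorem Finset.prod_range_two_mul {M : Type*} [CommMonoid M] (f : ℕ → M) (n : ℕ) :
    ∏ i ∈ range (2 * n), f i = ∏ i ∈ range n, f (2 * i) * f (2 * i + 1) := by
  induction n with
  | zero => rfl
  | succ n ih =>
    rw [mul_add, mul_one, prod_range_succ, prod_range_succ, prod_range_succ, ih, mul_assoc]

noncomputable section Matrices

variable (K : Type*)

def hilbertMatrix [DivisionRing K] (n : ℕ) : Matrix (Fin n) (Fin n) K :=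
  of fun i j => 1 / ((i : ℕ) + (j : ℕ) + 1)

def shiftedLegendreMatrix [Ring K] (n : ℕ) : Matrix (Fin n) (Fin n) K :=
  of fun i k => ((shiftedLegendre i).coeff k : K)

variable {K}

theorem isLowerTriangular_shiftedLegendreMatrix [Ring K] (n : ℕ) :
    (shiftedLegendreMatrix K n).IsLowerTriangular := fun i k hik => by
  rw [shiftedLegendreMatrix, of_apply,
    coeff_eq_zero_of_natDegree_lt (by rw [natDegree_shiftedLegendre]; exact hik), Int.cast_zero]

theorem det_shiftedLegendreMatrix [CommRing K] (n : ℕ) :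
    (shiftedLegendreMatrix K n).det = ∏ i ∈ range n, (-1) ^ i * ((i + i).choose i : K) := by
  rw [det_of_isLowerTriangular _ (isLowerTriangular_shiftedLegendreMatrix n),
    ← Fin.prod_univ_eq_prod_range]
  refine prod_congr rfl fun i _ => ?_
  simp [shiftedLegendreMatrix, coeff_shiftedLegendre]

variable [Field K] [CharZero K]

theorem shiftedLegendreMatrix_mul_hilbertMatrix_apply {n : ℕ} (i j : Fin n) :
    (shiftedLegendreMatrix K n * hilbertMatrix K n) i j =
      (-1) ^ (i : ℕ) * (j : ℕ).descFactorial i * (j : ℕ)! / (i + j + 1 : ℕ)! := by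
  rw [← sum_coeff_shiftedLegendre_div, mul_apply]
  simp only [shiftedLegendreMatrix, hilbertMatrix, of_apply, mul_one_div]
  rw [Fin.sum_univ_eq_sum_range (fun k => ((shiftedLegendre i).coeff k : K) / (k + j + 1))]
  refine (sum_subset (range_subset_range.mpr i.isLt) fun k _ hk => ?_).symm
  rw [coeff_eq_zero_of_natDegree_lt (by rw [natDegree_shiftedLegendre]; simpa using hk),
    Int.cast_zero, zero_div]

theorem isUpperTriangular_shiftedLegendreMatrix_mul_hilbertMatrix (n : ℕ) :
    (shiftedLegendreMatrix K n * hilbertMatrix K n).IsUpperTriangular := fun i j hji => by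
  rw [shiftedLegendreMatrix_mul_hilbertMatrix_apply,
    descFactorial_eq_zero_iff_lt.mpr (show (j : ℕ) < i from hji)]
  simp

theorem det_shiftedLegendreMatrix_mul_hilbertMatrix (n : ℕ) :
    (shiftedLegendreMatrix K n * hilbertMatrix K n).det =
      ∏ i ∈ range n, (-1) ^ i * (i ! : K) * i ! / (i + i + 1)! := by
  rw [det_of_isUpperTriangular (isUpperTriangular_shiftedLegendreMatrix_mul_hilbertMatrix n),
    ← Fin.prod_univ_eq_prod_range]
  refine prod_congr rfl fun i _ => ?_
  rw [shiftedLegendreMatrix_mul_hilbertMatrix_apply, descFactorial_self]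

theorem det_hilbertMatrix (n : ℕ) :
    (hilbertMatrix K n).det =
      (∏ i ∈ range n, (i ! : K)) ^ 4 / ∏ i ∈ range (2 * n), (i ! : K) := by
  have hL : (shiftedLegendreMatrix K n).det ≠ 0 := by
    rw [det_shiftedLegendreMatrix, prod_ne_zero_iff]
    intro i _
    have : ((i + i).choose i : K) ≠ 0 := mod_cast (choose_pos (le_add_left i i)).ne'
    exact mul_ne_zero (pow_ne_zero _ (neg_ne_zero.mpr one_ne_zero)) this
  rw [← mul_div_cancel_left₀ (hilbertMatrix K n).det hL, ← det_mul,
    det_shiftedLegendreMatrix_mul_hilbertMatrix, det_shiftedLegendreMatrix, ← prod_div_distrib,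
    prod_range_two_mul, ← prod_pow, ← prod_div_distrib]
  refine prod_congr rfl fun i _ => ?_
  rw [two_mul, cast_add_choose]
  field_simp

end Matrices

theorem hilbert_det (n : ℕ) :
    (Matrix.of fun i j : Fin n => (1 : ℚ) / ((i : ℕ) + (j : ℕ) + 1)).det =
      ((∏ i ∈ Finset.range n, Nat.factorial i : ℕ) : ℚ) ^ 4 /
        ((∏ i ∈ Finset.range (2 * n), Nat.factorial i : ℕ) : ℚ) := by
  push_cast
  exact det_hilbertMatrix n
end

section
/- The Hilbert matrix H_n with entries 1/(i+j−1) over ℚ has nonzero determinant, i.e., it is invertible. -/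
open MeasureTheory Polynomial Matrix
open scoped ENNReal

lemma quad_form_eq (n : ℕ) (x : Fin n → ℝ) :
    dotProduct x ((Matrix.of fun i j : Fin n => (1 : ℝ) / ((i : ℕ) + (j : ℕ) + 1)) *ᵥ x)
      = ∫ t in (0:ℝ)..1, (∑ i : Fin n, x i * t ^ (i : ℕ)) ^ 2 := by
  have h : ∀ t : ℝ, (∑ i : Fin n, x i * t ^ (i : ℕ)) ^ 2
      = ∑ i : Fin n, ∑ j : Fin n, x i * x j * t ^ ((i : ℕ) + (j : ℕ)) := by
    intro t
    rw [sq, Finset.sum_mul_sum]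
    refine Finset.sum_congr rfl fun i _ => Finset.sum_congr rfl fun j _ => ?_
    ring
  have hint : ∀ (i j : Fin n), IntervalIntegrable
      (fun t : ℝ => x i * x j * t ^ ((i : ℕ) + (j : ℕ))) volume 0 1 :=
    fun i j => (Continuous.mul continuous_const (continuous_pow _)).intervalIntegrable _ _
  simp only [h]
  rw [intervalIntegral.integral_finset_sum
    (f := fun (i : Fin n) (t : ℝ) => ∑ j : Fin n, x i * x j * t ^ ((i:ℕ)+(j:ℕ)))
    (fun i _ => ((continuous_finset_sum _ fun j _ => continuous_const.mul (continuous_pow _)).intervalIntegrable _ _))]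
  simp only [dotProduct, Matrix.mulVec, Matrix.of_apply]
  refine Finset.sum_congr rfl fun i _ => ?_
  rw [intervalIntegral.integral_finset_sum
    (f := fun (j : Fin n) (t : ℝ) => x i * x j * t ^ ((i:ℕ)+(j:ℕ)))
    (fun j _ => hint i j)]
  rw [Finset.mul_sum]
  refine Finset.sum_congr rfl fun j _ => ?_
  rw [intervalIntegral.integral_const_mul, integral_pow]
  push_cast
  ring

lemma hilbert_posdef (n : ℕ) :
    (Matrix.of fun i j : Fin n => (1 : ℝ) / ((i : ℕ) + (j : ℕ) + 1)).PosDef := by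
  rw [Matrix.posDef_iff_dotProduct_mulVec]
  constructor
  · ext i j
    simp [Matrix.IsHermitian, Matrix.conjTranspose_apply, add_comm ((i:ℕ):ℝ)]
  · intro x hx
    have hstar : star x = x := by ext i; simp
    rw [hstar, quad_form_eq]
    set p : Polynomial ℝ := ∑ i : Fin n, C (x i) * X ^ (i : ℕ) with hp
    have hpe : ∀ t : ℝ, p.eval t = ∑ i : Fin n, x i * t ^ (i : ℕ) := by
      intro t; simp [hp, eval_finset_sum]
    have hpne : p ≠ 0 := by
      intro h0
      apply hx
      ext i
      have hc : p.coeff (i : ℕ) = x i := by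
        simp only [hp, finset_sum_coeff, coeff_C_mul, coeff_X_pow]
        rw [Finset.sum_eq_single i]
        · simp
        · intro j _ hji
          have hne : (i : ℕ) ≠ (j : ℕ) := fun h => hji (Fin.ext h.symm)
          simp [hne]
        · simp
      rw [h0] at hc
      simpa using hc.symm
    have hroots : {t : ℝ | p.IsRoot t}.Finite := p.finite_setOf_isRoot hpne
    rw [intervalIntegral.integral_of_le (by norm_num : (0:ℝ) ≤ 1)]
    rw [MeasureTheory.setIntegral_pos_iff_support_of_nonneg_ae]
    · have hsub : Set.Ioc (0:ℝ) 1 \ {t : ℝ | p.IsRoot t}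
          ⊆ (Function.support fun t => (∑ i : Fin n, x i * t ^ (i : ℕ)) ^ 2) ∩ Set.Ioc 0 1 := by
        intro t ht
        refine ⟨?_, ht.1⟩
        simp only [Function.mem_support]
        intro h0
        exact ht.2 (by
          have := (pow_eq_zero_iff (two_ne_zero)).mp h0
          simpa [Polynomial.IsRoot, hpe] using this)
      have hm : volume (Set.Ioc (0:ℝ) 1 \ {t : ℝ | p.IsRoot t}) = 1 := by
        rw [measure_diff_null (hroots.measure_zero _)]
        simp
      calc (0:ℝ≥0∞) < 1 := by norm_num
        _ = volume (Set.Ioc (0:ℝ) 1 \ {t : ℝ | p.IsRoot t}) := hm.symm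
        _ ≤ _ := measure_mono hsub
    · exact Filter.Eventually.of_forall fun t => sq_nonneg _
    · exact Continuous.integrableOn_Ioc (by continuity)

theorem hilbert_det_ne_zero (n : ℕ) :
    (Matrix.of fun i j : Fin n => (1 : ℚ) / ((i : ℕ) + (j : ℕ) + 1)).det ≠ 0 := by
  intro h
  have hmap : (Matrix.of fun i j : Fin n => (1 : ℚ) / ((i : ℕ) + (j : ℕ) + 1)).map
      (Rat.castHom ℝ) = Matrix.of fun i j : Fin n => (1 : ℝ) / ((i : ℕ) + (j : ℕ) + 1) := by
    ext i j
    simp only [Matrix.map_apply, Matrix.of_apply, Rat.coe_castHom]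
    push_cast
    ring
  have hpos := (hilbert_posdef n).det_pos
  rw [← hmap, ← RingHom.mapMatrix_apply, ← RingHom.map_det, h] at hpos
  simp at hpos
end

section
/- The reciprocal of the determinant of the n×n Hilbert matrix is an integer; explicitly, 1/det(H_n) = c_{2n}/c_n^4 = n! · ∏_{i=1}^{2n−1} binomial(i, ⌊i/2⌋). -/
/-!
The Hilbert matrix is the Cauchy matrix `1 / (xᵢ + yⱼ)` with `xᵢ = i`, `yⱼ = j + 1`. Pivoting a
Cauchy matrix on its `(0, 0)` entry, the Schur complement has entries
`(xᵢ - x₀)(yⱼ - y₀) / ((xᵢ + yⱼ)(xᵢ + y₀)(x₀ + yⱼ))`, i.e. it is a smaller Cauchy matrix scaled by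
diagonal matrices on both sides; by induction this gives Cauchy's formula
`det = ∏_{i<j} (xⱼ - xᵢ)(yⱼ - yᵢ) / ∏_{i,j} (xᵢ + yⱼ)`. For the Hilbert matrix the numerator is the
square of the Vandermonde determinant of `0, …, n-1`, namely `(∏_{k<n} k!)²`, and the denominator
is `∏_{i<n} (i+n)! / i!`. The binomial form follows from
`(2m)! (2m+1)! = C(2m, m) C(2m+1, m) (m!)⁴ (m+1)`.
-/

open Finset Nat

theorem Finset.prod_range_eq_prod_Icc_one_of_eq_one {M : Type*} [CommMonoid M] (f : ℕ → M)
    (h : f 0 = 1) (m : ℕ) : ∏ i ∈ range m, f i = ∏ i ∈ Icc 1 (m - 1), f i := by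
  cases m with
  | zero => simp
  | succ m =>
    rw [prod_range_succ', h, mul_one, range_eq_Ico, prod_Ico_add' f 0 m 1,
      Nat.add_sub_cancel, ← Ico_add_one_right_eq_Icc, zero_add]

theorem Nat.sq_prod_factorial_mul_prod_ascFactorial (n : ℕ) :
    (∏ k ∈ range n, k !) ^ 2 * ∏ i ∈ range n, (i + 1).ascFactorial n =
      ∏ k ∈ range (2 * n), k ! := by
  rw [sq, mul_assoc, ← prod_mul_distrib, prod_congr rfl fun i _ => factorial_mul_ascFactorial i n,
    two_mul, prod_range_add]
  simp only [add_comm]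

theorem Nat.prod_range_two_mul_factorial_eq_pow_four_mul (n : ℕ) :
    ∏ k ∈ range (2 * n), k ! =
      (∏ k ∈ range n, k !) ^ 4 * (n ! * ∏ i ∈ range (2 * n), i.choose (i / 2)) := by
  induction n with
  | zero => simp
  | succ n ih =>
    have heven : (2 * n).choose n * n ! * n ! = (2 * n)! := by
      simpa [two_mul] using choose_mul_factorial_mul_factorial (le_add_right n n)
    have hodd : (2 * n + 1).choose n * n ! * (n + 1)! = (2 * n + 1)! := by
      have := choose_mul_factorial_mul_factorial (by omega : n ≤ 2 * n + 1)
      rwa [show 2 * n + 1 - n = n + 1 by omega] at this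
    rw [mul_add_one, prod_range_succ, prod_range_succ, ih, prod_range_succ, prod_range_succ,
      prod_range_succ, ← heven, ← hodd, factorial_succ,
      show 2 * n / 2 = n by omega, show (2 * n + 1) / 2 = n by omega]
    ring

namespace Matrix

variable {K : Type*} [Field K]

theorem det_succ_eq_mul_det_schur {n : ℕ} (A : Matrix (Fin (n + 1)) (Fin (n + 1)) K)
    (h : A 0 0 ≠ 0) :
    A.det = A 0 0 *
      (of fun i j : Fin n => A i.succ j.succ - A i.succ 0 / A 0 0 * A 0 j.succ).det := by
  let c : Fin (n + 1) → K := Fin.cases 0 fun i => A i.succ 0 / A 0 0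
  let B : Matrix (Fin (n + 1)) (Fin (n + 1)) K := of fun i j => A i j - c i * A 0 j
  have hB : A.det = B.det :=
    det_eq_of_forall_row_eq_smul_add_const c 0 rfl fun i j => by
      cases i using Fin.cases <;> simp [B, c]
  have hcol : ∀ i : Fin n, B i.succ 0 = 0 := fun i => by simp [B, c, h]
  have hsub : B.submatrix Fin.succ Fin.succ =
      of fun i j : Fin n => A i.succ j.succ - A i.succ 0 / A 0 0 * A 0 j.succ := by
    ext i j
    simp [B, c]
  rw [hB, det_succ_column_zero, Fin.sum_univ_succ,
    Finset.sum_eq_zero fun i _ => by rw [hcol, mul_zero, zero_mul]]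
  simp [Fin.succAbove_zero, hsub, B, c]

def cauchyMatrix {n : ℕ} (x y : Fin n → K) : Matrix (Fin n) (Fin n) K :=
  of fun i j => (x i + y j)⁻¹

theorem det_cauchyMatrix_succ {n : ℕ} (x y : Fin (n + 1) → K) (h : ∀ i j, x i + y j ≠ 0) :
    (cauchyMatrix x y).det = (x 0 + y 0)⁻¹ *
      (∏ i : Fin n, (x i.succ - x 0) / (x i.succ + y 0)) *
      (∏ j : Fin n, (y j.succ - y 0) / (x 0 + y j.succ)) *
      (cauchyMatrix (x ∘ Fin.succ) (y ∘ Fin.succ)).det := by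
  have hschur : (of fun i j : Fin n => cauchyMatrix x y i.succ j.succ -
      cauchyMatrix x y i.succ 0 / cauchyMatrix x y 0 0 * cauchyMatrix x y 0 j.succ) =
      diagonal (fun i => (x i.succ - x 0) / (x i.succ + y 0)) *
        cauchyMatrix (x ∘ Fin.succ) (y ∘ Fin.succ) *
        diagonal (fun j => (y j.succ - y 0) / (x 0 + y j.succ)) := by
    ext i j
    simp only [cauchyMatrix, of_apply, diagonal_mul, mul_diagonal, Function.comp_apply]
    field_simp [h i.succ j.succ, h i.succ 0, h 0 j.succ, h 0 0]
    ring
  rw [det_succ_eq_mul_det_schur _ (by simpa [cauchyMatrix] using h 0 0), hschur, det_mul,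
    det_mul, det_diagonal, det_diagonal]
  simp only [cauchyMatrix, of_apply]
  ring

theorem det_cauchyMatrix {n : ℕ} (x y : Fin n → K) (h : ∀ i j, x i + y j ≠ 0) :
    (cauchyMatrix x y).det =
      (∏ i, ∏ j ∈ Ioi i, (x j - x i) * (y j - y i)) / ∏ i, ∏ j, (x i + y j) := by
  induction n with
  | zero => simp
  | succ n ih =>
    rw [det_cauchyMatrix_succ x y h, ih (x ∘ Fin.succ) (y ∘ Fin.succ) fun i j => h _ _]
    simp only [Fin.prod_univ_succ, Fin.prod_Ioi_zero, Fin.prod_Ioi_succ, Function.comp_apply,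
      prod_mul_distrib, prod_div_distrib]
    field_simp

theorem det_vandermonde_id_eq_prod_factorial {R : Type*} [CommRing R] (n : ℕ) :
    (vandermonde fun i : Fin n => ((i : ℕ) : R)).det = ((∏ k ∈ range n, k ! : ℕ) : R) := by
  cases n with
  | zero => simp
  | succ n => rw [det_vandermonde_id_eq_superFactorial, prod_range_succ_factorial]

variable (K) in
def hilbertMatrix (n : ℕ) : Matrix (Fin n) (Fin n) K :=
  of fun i j => 1 / ((i : ℕ) + (j : ℕ) + 1)

theorem hilbertMatrix_eq_cauchyMatrix (n : ℕ) :
    hilbertMatrix K n = cauchyMatrix (fun i => ((i : ℕ) : K)) (fun j => ((j : ℕ) : K) + 1) := by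
  ext i j
  simp [hilbertMatrix, cauchyMatrix, add_assoc]

theorem det_hilbertMatrix [CharZero K] (n : ℕ) :
    (hilbertMatrix K n).det =
      ((∏ k ∈ range n, k ! : ℕ) : K) ^ 4 / ((∏ k ∈ range (2 * n), k ! : ℕ) : K) := by
  have hnum : ∏ i : Fin n, ∏ j ∈ Ioi i,
      (((j : ℕ) : K) - (i : ℕ)) * ((j : ℕ) + 1 - ((i : ℕ) + 1)) =
      ((∏ k ∈ range n, k ! : ℕ) : K) ^ 2 := by
    rw [← det_vandermonde_id_eq_prod_factorial, det_vandermonde, sq, ← prod_mul_distrib]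
    refine prod_congr rfl fun i _ => ?_
    rw [← prod_mul_distrib]
    exact prod_congr rfl fun j _ => by ring
  have hden : ∏ i : Fin n, ∏ j : Fin n, (((i : ℕ) : K) + ((j : ℕ) + 1)) =
      ((∏ i ∈ range n, (i + 1).ascFactorial n : ℕ) : K) := by
    simp only [ascFactorial_eq_prod_range, Nat.cast_prod, ← Fin.prod_univ_eq_prod_range]
    push_cast
    exact prod_congr rfl fun i _ => prod_congr rfl fun j _ => by ring
  have hfact : ((∏ k ∈ range n, k ! : ℕ) : K) ≠ 0 :=
    Nat.cast_ne_zero.mpr (prod_ne_zero_iff.mpr fun k _ => factorial_ne_zero k)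
  have hpos : ∀ i j : Fin n, ((i : ℕ) : K) + (((j : ℕ) : K) + 1) ≠ 0 := fun i j => by
    simpa [add_assoc] using Nat.cast_add_one_ne_zero (R := K) ((i : ℕ) + j)
  rw [hilbertMatrix_eq_cauchyMatrix, det_cauchyMatrix _ _ hpos, hnum, hden,
    ← sq_prod_factorial_mul_prod_ascFactorial]
  push_cast
  field_simp

end Matrix

theorem hilbert_det_reciprocal (n : ℕ) :
    1 / (Matrix.of fun i j : Fin n => (1 : ℚ) / ((i : ℕ) + (j : ℕ) + 1)).det =
        ((∏ i ∈ Finset.range (2 * n), Nat.factorial i : ℕ) : ℚ) /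
          ((∏ i ∈ Finset.range n, Nat.factorial i : ℕ) : ℚ) ^ 4 ∧
    1 / (Matrix.of fun i j : Fin n => (1 : ℚ) / ((i : ℕ) + (j : ℕ) + 1)).det =
        ((Nat.factorial n *
          ∏ i ∈ Finset.Icc 1 (2 * n - 1), Nat.choose i (i / 2) : ℕ) : ℚ) := by
  have hdet : 1 / (Matrix.hilbertMatrix ℚ n).det =
      ((∏ k ∈ range (2 * n), k ! : ℕ) : ℚ) / ((∏ k ∈ range n, k ! : ℕ) : ℚ) ^ 4 := by
    rw [Matrix.det_hilbertMatrix, one_div_div]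
  refine ⟨hdet, hdet.trans ?_⟩
  have hfact : ((∏ k ∈ range n, k ! : ℕ) : ℚ) ^ 4 ≠ 0 := by positivity
  rw [Nat.prod_range_two_mul_factorial_eq_pow_four_mul,
    ← prod_range_eq_prod_Icc_one_of_eq_one _ (by simp), Nat.cast_mul, Nat.cast_pow,
    mul_div_cancel_left₀ _ hfact]
end

section
/- Let b_1,...,b_{n+1} and c_1,...,c_n be pairwise distinct nonzero elements of a field F of characteristic zero. The (n+1)×(n+1) matrix with first column all 1's and remaining entries b_s/(b_s − c_j) is invertible. -/
open Polynomial Finset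

theorem A_invertible {F : Type*} [Field F] [CharZero F] (n : ℕ)
    (b : Fin (n + 1) → F) (c : Fin n → F)
    (hb : Function.Injective b) (hc : Function.Injective c)
    (hbc : ∀ s j, b s ≠ c j)
    (hb0 : ∀ s, b s ≠ 0) (hc0 : ∀ j, c j ≠ 0) :
    IsUnit ((Matrix.of fun s j =>
        Fin.cases (1 : F) (fun j' => b s / (b s - c j')) j :
      Matrix (Fin (n + 1)) (Fin (n + 1)) F)) := by
  classical
  set A : Matrix (Fin (n + 1)) (Fin (n + 1)) F :=
    (Matrix.of fun s j => Fin.cases (1 : F) (fun j' => b s / (b s - c j')) j) with hA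
  rw [Matrix.isUnit_iff_isUnit_det, isUnit_iff_ne_zero]
  intro hdet
  obtain ⟨v, hv, hAv⟩ := (Matrix.exists_mulVec_eq_zero_iff).mpr hdet
  set P : F[X] := C (v 0) * ∏ k, (X - C (c k)) +
      ∑ j, C (v j.succ) * (X * ∏ k ∈ univ.erase j, (X - C (c k))) with hP
  have hevalP : ∀ x : F, P.eval x =
      v 0 * ∏ k, (x - c k) + ∑ j, v j.succ * (x * ∏ k ∈ univ.erase j, (x - c k)) := by
    intro x
    simp [hP, eval_prod, eval_finset_sum]
  have hmul : ∀ s, A.mulVec v s =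
      v 0 + ∑ j, (b s / (b s - c j)) * v j.succ := by
    intro s
    rw [Matrix.mulVec, dotProduct, Fin.sum_univ_succ]
    simp [hA]
  have heval : ∀ s, P.eval (b s) = 0 := by
    intro s
    have h0 : ∀ k, b s - c k ≠ 0 := fun k => sub_ne_zero.mpr (hbc s k)
    have key : P.eval (b s) =
        (∏ k, (b s - c k)) * (v 0 + ∑ j, (b s / (b s - c j)) * v j.succ) := by
      rw [hevalP, mul_add, Finset.mul_sum]
      congr 1
      · ring
      · refine Finset.sum_congr rfl fun j _ => ?_
        rw [← Finset.mul_prod_erase _ _ (Finset.mem_univ j)]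
        field_simp
        rw [eq_div_iff (h0 j)]
    rw [key, ← hmul s, hAv]
    simp
  have hprod : ∀ (t : Finset (Fin n)), (∏ k ∈ t, (X - C (c k)) : F[X]).natDegree = t.card := by
    intro t
    rw [natDegree_prod_of_monic _ _ fun k _ => monic_X_sub_C (c k)]
    simp
  have hdeg : P.natDegree < Fintype.card (Fin (n + 1)) := by
    rw [Fintype.card_fin]
    have h1 : (C (v 0) * ∏ k, (X - C (c k)) : F[X]).natDegree ≤ n := by
      refine natDegree_mul_le.trans ?_
      rw [natDegree_C, hprod]
      simp
    have h2 : (∑ j, C (v j.succ) * (X * ∏ k ∈ univ.erase j, (X - C (c k))) : F[X]).natDegree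
        ≤ n := by
      refine (natDegree_sum_le _ _).trans ?_
      rw [Finset.fold_max_le]
      refine ⟨Nat.zero_le _, fun j _ => ?_⟩
      simp only [Function.comp]
      refine natDegree_mul_le.trans ?_
      rw [natDegree_C, zero_add]
      refine natDegree_mul_le.trans ?_
      rw [natDegree_X, hprod, Finset.card_erase_of_mem (Finset.mem_univ j),
        Finset.card_univ, Fintype.card_fin]
      have := j.pos
      omega
    exact lt_of_le_of_lt ((natDegree_add_le _ _).trans (max_le h1 h2)) (Nat.lt_succ_self n)
  have hP0 : P = 0 := eq_zero_of_natDegree_lt_card_of_eval_eq_zero P hb heval hdeg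
  -- evaluate at c j to get v j.succ = 0
  have hvsucc : ∀ j : Fin n, v j.succ = 0 := by
    intro j
    have h := hevalP (c j)
    rw [hP0, eval_zero] at h
    have h1 : (∏ k, (c j - c k)) = 0 :=
      Finset.prod_eq_zero (Finset.mem_univ j) (by simp)
    rw [← Finset.add_sum_erase _ _ (Finset.mem_univ j)] at h
    have h2 : ∑ j' ∈ univ.erase j, v j'.succ * (c j * ∏ k ∈ univ.erase j', (c j - c k)) = 0 := by
      refine Finset.sum_eq_zero fun j' hj' => ?_
      have hne' : j ≠ j' := fun hEq => (Finset.mem_erase.mp hj').1 hEq.symm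
      have hmem : j ∈ univ.erase j' := Finset.mem_erase.mpr ⟨hne', Finset.mem_univ j⟩
      rw [Finset.prod_eq_zero hmem (by simp)]
      ring
    rw [h1, h2, mul_zero, zero_add, add_zero] at h
    have hne : c j * ∏ k ∈ univ.erase j, (c j - c k) ≠ 0 := by
      refine mul_ne_zero (hc0 j) (Finset.prod_ne_zero_iff.mpr fun k hk => ?_)
      exact sub_ne_zero.mpr fun hEq => (Finset.mem_erase.mp hk).1 (hc hEq).symm
    exact (mul_eq_zero.mp h.symm).resolve_right hne
  have hv0 : v 0 = 0 := by
    have h := hmul 0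
    rw [hAv] at h
    simp only [hvsucc, mul_zero, Finset.sum_const_zero, add_zero] at h
    exact h.symm
  apply hv
  funext i
  refine Fin.cases ?_ ?_ i
  · exact hv0
  · exact hvsucc
end

section
/- Let b_1,...,b_m and c_1,...,c_m be 2m pairwise distinct nonzero elements of a field F of characteristic zero, and let I ⊇ {c_1,...,c_m} be a finite set of further elements distinct from all b_s. Then the m×m matrix with entries M_{s,t} = a-weighted products ∏_{ℓ∈I∖{c_t}} (b_s − ℓ) · b_s, i.e., M_{s,t} = b_s ∏_{ℓ ∈ I, ℓ ≠ c_t} (b_s − ℓ), has determinant equal to a nonzero multiple of a Cauchy determinant; in particular det M ≠ 0. -/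
/-!
Pulling the nonzero factor `b s * ∏ ℓ ∈ I, (b s - ℓ)` out of row `s` turns the matrix into the
Cauchy matrix `[(b s - c t)⁻¹]`, whose nonsingularity follows from Lagrange interpolation.
-/

open Finset Polynomial Lagrange

theorem Matrix.det_cauchy_ne_zero {F ι : Type*} [Field F] [Fintype ι] [DecidableEq ι]
    {b c : ι → F} (hb : Function.Injective b) (hc : Function.Injective c)
    (hbc : ∀ s t, b s ≠ c t) :
    (Matrix.of fun s t => (b s - c t)⁻¹).det ≠ 0 := by
  -- By the barycentric formula, a kernel vector `v` gives an interpolant through the nodes `c`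
  -- that vanishes at every `b s`; having degree `< card ι`, it is zero, and so is `v`.
  rw [Ne, ← Matrix.exists_mulVec_eq_zero_iff, not_exists]
  rintro v ⟨hv, hCv⟩
  have hw : ∀ t, nodalWeight univ c t ≠ 0 := fun t => nodalWeight_ne_zero hc.injOn (mem_univ t)
  set r : ι → F := fun t => v t / nodalWeight univ c t
  have hP : interpolate univ c r = 0 := by
    refine eq_zero_of_degree_lt_of_eval_index_eq_zero univ hb.injOn
      (degree_interpolate_lt r hc.injOn) fun s _ => ?_
    have hsum : ∑ t, nodalWeight univ c t * (b s - c t)⁻¹ * r t =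
        (Matrix.of fun s t => (b s - c t)⁻¹).mulVec v s := by
      refine sum_congr rfl fun t _ => ?_
      rw [mul_comm (nodalWeight _ _ _), mul_assoc, mul_div_cancel₀ _ (hw t)]
      rfl
    rw [eval_interpolate_not_at_node r fun t _ => hbc s t, hsum, hCv, Pi.zero_apply, mul_zero]
  refine hv (funext fun t => ?_)
  have hr : r t = 0 := by rw [← eval_interpolate_at_node r hc.injOn (mem_univ t), hP, eval_zero]
  exact (div_eq_zero_iff.mp hr).resolve_right (hw t)

theorem det_M_ne_zero_general {F : Type*} [Field F] [DecidableEq F] (m : ℕ)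
    (I : Finset F) (c : Fin m → F) (b : Fin m → F)
    (hc : Function.Injective c) (hcI : ∀ t, c t ∈ I)
    (hb : Function.Injective b) (hbI : ∀ s, b s ∉ I)
    (hb0 : ∀ s, b s ≠ 0) :
    (Matrix.of fun s t : Fin m =>
        b s * ∏ ℓ ∈ I.erase (c t), (b s - ℓ)).det ≠ 0 := by
  have hsub : ∀ s, ∀ ℓ ∈ I, b s - ℓ ≠ 0 := fun s ℓ hℓ h => hbI s (sub_eq_zero.mp h ▸ hℓ)
  have hbc : ∀ s t, b s ≠ c t := fun s t => sub_ne_zero.mp (hsub s (c t) (hcI t))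
  have hentry : ∀ s t, b s * ∏ ℓ ∈ I.erase (c t), (b s - ℓ) =
      (b s * ∏ ℓ ∈ I, (b s - ℓ)) * (b s - c t)⁻¹ := fun s t => by
    rw [← mul_prod_erase I (fun ℓ => b s - ℓ) (hcI t), mul_comm (b s - c t), ← mul_assoc,
      mul_inv_cancel_right₀ (sub_ne_zero.mpr (hbc s t))]
  simp_rw [hentry]
  refine (Matrix.det_mul_column (fun s => b s * ∏ ℓ ∈ I, (b s - ℓ))
    (Matrix.of fun s t => (b s - c t)⁻¹)).trans_ne ?_
  exact mul_ne_zero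
    (prod_ne_zero_iff.mpr fun s _ => mul_ne_zero (hb0 s) (prod_ne_zero_iff.mpr (hsub s)))
    (Matrix.det_cauchy_ne_zero hb hc hbc)

theorem det_M_ne_zero {F : Type*} [Field F] [CharZero F] [DecidableEq F] (m : ℕ)
    (I : Finset F) (c : Fin m → F) (b : Fin m → F)
    (hc : Function.Injective c) (hcI : ∀ t, c t ∈ I)
    (hb : Function.Injective b) (hbI : ∀ s, b s ∉ I)
    (hb0 : ∀ s, b s ≠ 0) (hI0 : ∀ ℓ ∈ I, ℓ ≠ 0) :
    (Matrix.of fun s t : Fin m =>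
        b s * ∏ ℓ ∈ I.erase (c t), (b s - ℓ)).det ≠ 0 :=
  det_M_ne_zero_general m I c b hc hcI hb hbI hb0
end
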